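/- Let k ≥ 1, let τ = (τ_n)_{n≥0} satisfy Property (P_k) with V_n = {v_{1,n},…,v_{m_n,n}} for n ≥ 1, and fix n ≥ 1. Let (x, y) be a nontrivial asymptotic pair in X_τ^{(n)}. Then J(x,y) = (v_{i,n}, ℓ) for some ℓ ∈ ℤ and some 1 ≤ i ≤ k, and moreover x_{[ℓ-2i, ℓ)} = v_{m_n,n} v_{1,n}² v_{2,n}² … v_{i-1,n}² v_{i,n}; that is, at the bifurcation point the signal v_{i,n} is always preceded by v_{m_n,n} v_{1,n}² … v_{i-1,n}². -/

import Mathlib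

open Filter Topology MeasureTheory

namespace AsympSOE

/-! ### Subshift basics -/

/-- Shift of a bi-infinite sequence by `n` (the `n`-th power of the left shift `S`). -/
def SShift {A : Type*} (n : ℤ) (x : ℤ → A) : ℤ → A := fun i => x (i + n)

/-- Two bi-infinite sequences are (left) asymptotic: they agree on a left half-line. -/
def SAsymp {A : Type*} (x y : ℤ → A) : Prop := ∃ ℓ : ℤ, ∀ i < ℓ, x i = y i

/-- `y` belongs to the shift-orbit of `x`. -/
def SSameOrbit {A : Type*} (x y : ℤ → A) : Prop := ∃ n : ℤ, SShift n x = y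

/-- The shift-orbits of `x` and `y` are asymptotic. -/
def SOrbAsymp {A : Type*} (x y : ℤ → A) : Prop :=
  ∃ n n' : ℤ, SAsymp (SShift n x) (SShift n' y)

/-- `C` is an asymptotic component of the subshift `X`: it is the `SOrbAsymp`-class of
some `x ∈ X` and contains at least two distinct orbits. -/
def SIsAsymComponent {A : Type*} (X : Set (ℤ → A)) (C : Set (ℤ → A)) : Prop :=
  ∃ x ∈ X, C = {y ∈ X | SOrbAsymp x y} ∧ ∃ y ∈ X, SOrbAsymp x y ∧ ¬ SSameOrbit x y

/-- A subshift: a nonempty closed shift-invariant set of bi-infinite sequences. -/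
def IsSubshift {A : Type*} [TopologicalSpace A] (X : Set (ℤ → A)) : Prop :=
  X.Nonempty ∧ IsClosed X ∧ (∀ x ∈ X, SShift 1 x ∈ X) ∧ (∀ x ∈ X, SShift (-1) x ∈ X)

/-- A minimal subshift: every orbit is dense. -/
def IsMinimalSubshift {A : Type*} [TopologicalSpace A] (X : Set (ℤ → A)) : Prop :=
  IsSubshift X ∧ ∀ x ∈ X, ∀ y ∈ X, y ∈ closure {z | SSameOrbit x z}

/-- The words of length `n` appearing in points of `X`. -/
def langOf {A : Type*} (X : Set (ℤ → A)) (n : ℕ) : Set (List A) :=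
  {w | ∃ x ∈ X, ∃ a : ℤ, (List.range n).map (fun t => x (a + t)) = w}

/-- The complexity function of a subshift. -/
noncomputable def complexityOf {A : Type*} (X : Set (ℤ → A)) (n : ℕ) : ℕ :=
  (langOf X n).ncard

/-- A Toeplitz sequence. -/
def IsToeplitzSeq {A : Type*} (x : ℤ → A) : Prop :=
  ∀ n : ℤ, ∃ p : ℕ, 0 < p ∧ ∀ k : ℤ, x (n + k * p) = x n

/-- A Toeplitz subshift: the shift-orbit closure of a Toeplitz sequence. -/
def IsToeplitzSubshift {A : Type*} [TopologicalSpace A] (X : Set (ℤ → A)) : Prop :=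
  ∃ x : ℤ → A, IsToeplitzSeq x ∧ X = closure {z | SSameOrbit x z}

/-! ### General topological dynamical systems -/

/-- The (full) orbit of `x` under the invertible map `T`. -/
def orbitEq {X : Type*} (T : Equiv.Perm X) (x : X) : Set X := {y | ∃ n : ℤ, (T ^ n) x = y}

/-- `x` and `y` are (left) asymptotic for `T`: `dist (T⁻ⁿ x) (T⁻ⁿ y) → 0` as `n → ∞`. -/
def MAsymp {X : Type*} [MetricSpace X] (T : Equiv.Perm X) (x y : X) : Prop :=
  Tendsto (fun n : ℕ => dist ((T ^ (-(n : ℤ))) x) ((T ^ (-(n : ℤ))) y)) atTop (𝓝 0)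

/-- The orbits of `x` and `y` are asymptotic. -/
def MOrbAsymp {X : Type*} [MetricSpace X] (T : Equiv.Perm X) (x y : X) : Prop :=
  ∃ n n' : ℤ, MAsymp T ((T ^ n) x) ((T ^ n') y)

/-- `C` is an asymptotic component of the system `(X, T)`: the `MOrbAsymp`-class of some
point `x`, containing at least two distinct orbits. -/
def MIsAsymComponent {X : Type*} [MetricSpace X] (T : Equiv.Perm X) (C : Set X) : Prop :=
  ∃ x, C = {y | MOrbAsymp T x y} ∧ ∃ y, MOrbAsymp T x y ∧ y ∉ orbitEq T x

/-- A minimal Cantor system: the compact metric space `X` is a Cantor space (nonempty,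
totally disconnected, without isolated points) and every `T`-orbit is dense. -/
def IsMinimalCantor {X : Type*} [MetricSpace X] (T : X ≃ₜ X) : Prop :=
  CompactSpace X ∧ TotallyDisconnectedSpace X ∧ Nonempty X ∧
    (∀ x : X, Filter.NeBot (𝓝[≠] x)) ∧ ∀ x : X, Dense (orbitEq T.toEquiv x)

/-- Strong orbit equivalence of the systems `(X, T)` and `(Y, S)`: an orbit equivalence
whose two orbit cocycles each have at most one point of discontinuity. -/
def IsSOE {X Y : Type*} [TopologicalSpace X] [TopologicalSpace Y]
    (T : X ≃ₜ X) (S : Y ≃ₜ Y) : Prop :=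
  ∃ φ : X ≃ₜ Y,
    (∀ x : X, φ '' orbitEq T.toEquiv x = orbitEq S.toEquiv (φ x)) ∧
    ∃ α β : X → ℤ,
      (∀ x, φ (T x) = (S.toEquiv ^ α x) (φ x)) ∧
      (∀ x, φ ((T.toEquiv ^ β x) x) = S (φ x)) ∧
      {x | ¬ContinuousAt α x}.Subsingleton ∧
      {x | ¬ContinuousAt β x}.Subsingleton

/-- The automorphism group of a system `(Y, S)`, as a subgroup of the permutation group:
the bi-continuous bijections commuting with `S`. -/
def autGroup {Y : Type*} [TopologicalSpace Y] (S : Y ≃ₜ Y) : Subgroup (Equiv.Perm Y) where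
  carrier := {φ | Continuous φ ∧ Continuous φ.symm ∧ ∀ y, φ (S y) = S (φ y)}
  one_mem' := ⟨continuous_id, continuous_id, fun _ => rfl⟩
  mul_mem' := by
    rintro a b ⟨ha1, ha2, ha3⟩ ⟨hb1, hb2, hb3⟩
    refine ⟨ha1.comp hb1, hb2.comp ha2, fun y => ?_⟩
    simp only [Equiv.Perm.mul_apply, hb3, ha3]
  inv_mem' := by
    rintro a ⟨ha1, ha2, ha3⟩
    refine ⟨by simpa using ha2, by rw [Equiv.Perm.inv_def, Equiv.symm_symm]; exact ha1, fun y => ?_⟩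
    have h : a (S (a⁻¹ y)) = S y := by
      rw [ha3 (a⁻¹ y), Equiv.Perm.inv_def, Equiv.apply_symm_apply]
    calc a⁻¹ (S y) = a⁻¹ (a (S (a⁻¹ y))) := by rw [h]
    _ = S (a⁻¹ y) := by rw [Equiv.Perm.inv_def, Equiv.symm_apply_apply]

/-! ### S-adic subshifts and Property (P_k) -/

/-- The word `x_a x_{a+1} … x_{a+len-1}` read in the bi-infinite sequence `x`. -/
def factorWord {A : Type*} (x : ℤ → A) (a : ℤ) (len : ℕ) : List A :=
  (List.range len).map fun t => x (a + t)

/-- `tauIter τ n d a = (τ_n ∘ τ_{n+1} ∘ … ∘ τ_{n+d-1}) (a)`: the image of the letter `a`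
of level `n + d` under the composition of the directive sequence down to level `n`.
In particular `tauIter τ 0 n` is `τ_{[0,n)}`. -/
def tauIter (τ : ℕ → ℕ → List ℕ) (n : ℕ) : ℕ → ℕ → List ℕ
  | 0, a => [a]
  | d + 1, a => (τ (n + d) a).flatMap (tauIter τ n d)

/-- The S-adic subshift generated by the directive sequence `τ` at level `n`
(the level-`n` alphabet consists of the naturals `< m n`). -/
def SAdicLevel (m : ℕ → ℕ) (τ : ℕ → ℕ → List ℕ) (n : ℕ) : Set (ℤ → ℕ) :=
  {x | (∀ i, x i < m n) ∧
    ∀ (a : ℤ) (len : ℕ), ∃ N c, n < N ∧ c < m N ∧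
      factorWord x a len <:+: tauIter τ n (N - n) c}

/-- The prescribed prefix `v_1² v_2² … v_{a}² v_{a+1} … v_{k+1}` in `0`-based letters:
letters `0, …, a-1` doubled, followed by the letters `a, …, k`. -/
def pkPrefix (k a : ℕ) : List ℕ :=
  (List.range a).flatMap (fun j => [j, j]) ++ (List.range (k + 1 - a)).map (fun j => a + j)

/-- Property `(P_k)` for a directive sequence `τ` with alphabet sizes `m`: `τ₀` is a
(non-erasing) hat morphism and, for every `n ≥ 1`, `τ_n` is primitive, has the prescribed
prefixes, ends with the last letter of the level-`n` alphabet, and no image contains the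
word (last letter)(first letter).  Level-`n` letters are `0, 1, …, m n - 1`, so the
letter `v_{i,n}` of the paper is `i - 1`. -/
def PropertyPk (k : ℕ) (m : ℕ → ℕ) (τ : ℕ → ℕ → List ℕ) : Prop :=
  (∀ n, 1 ≤ n → k < m n) ∧
  (∀ n a, a < m (n + 1) → τ n a ≠ [] ∧ ∀ c ∈ τ n a, c < m n) ∧
  (∀ a b, a < m 1 → b < m 1 → a ≠ b → ∀ c, c ∈ τ 0 a → c ∉ τ 0 b) ∧
  (∀ n, 1 ≤ n → ∀ a, a < m (n + 1) → ∀ b, b < m n → b ∈ τ n a) ∧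
  (∀ n, 1 ≤ n → ∀ a, a ≤ k → pkPrefix k a <+: τ n a) ∧
  (∀ n, 1 ≤ n → ∀ a, k < a → a < m (n + 1) → (List.replicate (a + 1) 0 ++ [1]) <+: τ n a) ∧
  (∀ n, 1 ≤ n → ∀ a, a < m (n + 1) →
    ([m n - 1] <:+ τ n a ∧ ¬ ([m n - 1, 0] <:+: τ n a)))

/-- Property `(P_∞)`: as `(P_k)` but with `k` replaced by `n` at level `n`. -/
def PropertyPinf (m : ℕ → ℕ) (τ : ℕ → ℕ → List ℕ) : Prop :=
  (∀ n, 1 ≤ n → n < m n) ∧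
  (∀ n a, a < m (n + 1) → τ n a ≠ [] ∧ ∀ c ∈ τ n a, c < m n) ∧
  (∀ a b, a < m 1 → b < m 1 → a ≠ b → ∀ c, c ∈ τ 0 a → c ∉ τ 0 b) ∧
  (∀ n, 1 ≤ n → ∀ a, a < m (n + 1) → ∀ b, b < m n → b ∈ τ n a) ∧
  (∀ n, 1 ≤ n → ∀ a, a ≤ n → pkPrefix n a <+: τ n a) ∧
  (∀ n, 1 ≤ n → ∀ a, n < a → a < m (n + 1) → (List.replicate (a + 1) 0 ++ [1]) <+: τ n a) ∧
  (∀ n, 1 ≤ n → ∀ a, a < m (n + 1) →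
    ([m n - 1] <:+ τ n a ∧ ¬ ([m n - 1, 0] <:+: τ n a)))

/-- The (integer) position in the concatenation `σ(y)` at which the block `σ(y_j)` starts,
the block `σ(y_0)` starting at position `0`. -/
def cumLen (σ : ℕ → List ℕ) (y : ℤ → ℕ) (j : ℤ) : ℤ :=
  if 0 ≤ j then ((List.range j.toNat).map fun t => ((σ (y t)).length : ℤ)).sum
  else -(((List.range (-j).toNat).map fun t => ((σ (y (j + t))).length : ℤ)).sum)

/-- `x = S^r (σ(y))`, where `σ(y) = … σ(y_{-1}).σ(y_0) σ(y_1) …` is the concatenated image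
of the bi-infinite sequence `y` (block `σ(y_0)` starting at coordinate `0`): for every `j`,
the word `σ(y_j)` is read in `x` starting at position `cumLen σ y j - r`. -/
def IsShiftedImage (σ : ℕ → List ℕ) (y : ℤ → ℕ) (r : ℤ) (x : ℤ → ℕ) : Prop :=
  ∀ j : ℤ, factorWord x (cumLen σ y j - r) (σ (y j)).length = σ (y j)

/-!
For `ν ≥ 1` the blocks `τ_ν(a)` begin with `v_1`, end with `v_{m_ν}`, never contain
`v_{m_ν} v_1`, and form a prefix code (two distinct blocks first differ inside the prescribed
prefixes). Hence in any concatenation of blocks the factor `v_{m_ν} v_1` marks exactly the block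
boundaries, and a long enough word is cut into blocks in the same way however it is desubstituted,
at least up to its last boundary. Applied to the common past of `x` and `y` at level `n`, this
shows that `x` and `y` bifurcate at the same offset inside two distinct level-`(n+1)` letters
`b, b'`, right after a boundary: `x_{[ℓ-|p|-1, ℓ)} = v_{m_n} p`, where `p` is the longest common
prefix of `τ_n(b)` and `τ_n(b')`. Moreover `b` and `b'` are preceded by a long common word of
level-`(n+1)` letters, so the same argument one level up makes `(b, b')` the first difference of
two blocks `τ_{n+1}(a)`, `τ_{n+1}(a')`. By the prescribed prefixes such a first difference is
always `{v_i, v_{i+1}}` with `i ≤ k`, and then `p = v_1² … v_{i-1}² v_i`.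
-/

section Words

variable {α β : Type*}

lemma singleton_suffix_of_suffix {z : β} {l s : List β} (hl : [z] <:+ l) (hs : s <:+ l)
    (hne : s ≠ []) : [z] <:+ s := by
  rcases List.suffix_or_suffix_of_suffix hl hs with h | h
  · exact h
  · rcases List.suffix_cons_iff.mp h with rfl | h
    · exact List.suffix_refl _
    · exact absurd (List.eq_nil_of_suffix_nil h) hne

lemma singleton_prefix_of_prefix {f : β} {l p : List β} (hl : [f] <+: l) (hp : p <+: l)
    (hne : p ≠ []) : [f] <+: p := by
  rw [← List.reverse_suffix] at hl hp ⊢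
  exact singleton_suffix_of_suffix hl hp (by simpa using hne)

lemma exists_eq_append_flatMap_of_suffix {σ : α → List β} {s : List β} :
    ∀ {u : List α}, s <:+ u.flatMap σ → s ≠ [] →
      ∃ D v, ∃ a ∈ u, D ≠ [] ∧ D <:+ σ a ∧ v <:+ u ∧ s = D ++ v.flatMap σ
  | [], h, hne => absurd (List.eq_nil_of_suffix_nil h) hne
  | a :: u, h, hne => by
    rw [List.flatMap_cons] at h
    by_cases hs : s <:+ u.flatMap σ
    · obtain ⟨D, v, b, hb, hD, hDb, hv, rfl⟩ := exists_eq_append_flatMap_of_suffix hs hne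
      exact ⟨D, v, b, List.mem_cons_of_mem a hb, hD, hDb, hv.trans (List.suffix_cons a u), rfl⟩
    · obtain ⟨D, rfl⟩ :=
        (List.suffix_or_suffix_of_suffix h (List.suffix_append _ _)).resolve_left hs
      refine ⟨D, u, a, List.mem_cons_self, ?_, List.suffix_append_self_iff.mp h,
        List.suffix_cons a u, rfl⟩
      rintro rfl
      exact hs (by simp)

lemma exists_eq_flatMap_append_of_prefix {σ : α → List β} {c : β} :
    ∀ {u : List α} {q : List β}, q ++ [c] <+: u.flatMap σ →
      ∃ v b p t, v ++ [b] <+: u ∧ σ b = p ++ c :: t ∧ q = v.flatMap σ ++ p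
  | [], q, h => by simpa using h.length_le
  | a :: u, q, h => by
    rw [List.flatMap_cons] at h
    by_cases hq : q.length < (σ a).length
    · obtain ⟨t, ht⟩ := List.prefix_of_prefix_length_le h (List.prefix_append _ _)
        (by simpa using hq)
      exact ⟨[], a, q, t, by simp, by simpa using ht.symm, by simp⟩
    · obtain ⟨q', rfl⟩ := List.prefix_of_prefix_length_le (List.prefix_append _ _)
        ((List.prefix_append q [c]).trans h) (by omega)
      obtain ⟨v, b, p, t, hv, hb, rfl⟩ :=
        exists_eq_flatMap_append_of_prefix (u := u) (by simpa [List.append_assoc] using h)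
      exact ⟨a :: v, b, p, t, by simpa using hv, hb, by simp [List.append_assoc]⟩

end Words

section FirstDiff

variable {α : Type*}

def FirstDiff (u v p : List α) (c d : α) : Prop :=
  c ≠ d ∧ (∃ s, u = p ++ c :: s) ∧ ∃ t, v = p ++ d :: t

variable {u v p q : List α} {c d c' d' : α}

lemma FirstDiff.symm (h : FirstDiff u v p c d) : FirstDiff v u p d c :=
  ⟨h.1.symm, h.2.2, h.2.1⟩

lemma FirstDiff.ne (h : FirstDiff u v p c d) : u ≠ v := by
  obtain ⟨hcd, ⟨s, rfl⟩, ⟨t, ht⟩⟩ := h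
  intro hv
  simp_all

lemma FirstDiff.not_prefix (h : FirstDiff u v p c d) : ¬ u <+: v := by
  obtain ⟨hcd, ⟨s, rfl⟩, ⟨t, rfl⟩⟩ := h
  intro huv
  simp only [List.prefix_append_right_inj, List.cons_prefix_cons] at huv
  exact hcd huv.1

lemma FirstDiff.prefix_of_prefix (h : FirstDiff u v p c d) (hu : q <+: u) (hv : q <+: v) :
    q <+: p := by
  obtain ⟨hcd, ⟨s, rfl⟩, ⟨t, rfl⟩⟩ := h
  rcases List.prefix_or_prefix_of_prefix hu (List.prefix_append p _) with hq | ⟨e, rfl⟩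
  · exact hq
  · cases e with
    | nil => simp
    | cons e₀ e =>
      simp only [List.prefix_append_right_inj, List.cons_prefix_cons] at hu hv
      exact absurd (hu.1.symm.trans hv.1) hcd

lemma FirstDiff.unique (h : FirstDiff u v p c d) (h' : FirstDiff u v q c' d') :
    p = q ∧ c = c' ∧ d = d' := by
  obtain ⟨-, ⟨s, rfl⟩, ⟨t, rfl⟩⟩ := id h
  obtain ⟨-, ⟨s', hs'⟩, ⟨t', ht'⟩⟩ := id h'
  have hqp := h.prefix_of_prefix ⟨_, hs'.symm⟩ ⟨_, ht'.symm⟩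
  have hpq := h'.prefix_of_prefix (List.prefix_append _ _) (List.prefix_append _ _)
  obtain rfl : p = q := hpq.eq_of_length_le hqp.length_le
  simp only [List.append_cancel_left_eq, List.cons.injEq] at hs' ht'
  exact ⟨rfl, hs'.1, ht'.1⟩

lemma FirstDiff.of_prefix (hu : p ++ [c] <+: u) (hv : p ++ [d] <+: v) (hcd : c ≠ d) :
    FirstDiff u v p c d := by
  obtain ⟨s, rfl⟩ := hu
  obtain ⟨t, rfl⟩ := hv
  exact ⟨hcd, ⟨s, by simp⟩, ⟨t, by simp⟩⟩

end FirstDiff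

section MarkedCode

variable {α β : Type*} {f z : β}

lemma eq_of_append_eq_append_of_marker {E₁ E₂ q₁ q₂ : List β} (h : E₁ ++ q₁ = E₂ ++ q₂)
    (hE₁ : [z] <:+ E₁) (hE₂ : [z] <:+ E₂) (hq₁ : [f] <+: q₁) (hq₂ : [f] <+: q₂)
    (hq₁z : ¬ [z, f] <:+: q₁) (hq₂z : ¬ [z, f] <:+: q₂) : q₁ = q₂ := by
  wlog hle : q₁.length ≤ q₂.length generalizing E₁ E₂ q₁ q₂
  · exact (this h.symm hE₂ hE₁ hq₂ hq₁ hq₂z hq₁z (by omega)).symm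
  have hq₁' : q₁ <:+ E₂ ++ q₂ := h ▸ List.suffix_append E₁ q₁
  obtain ⟨e, rfl⟩ := List.suffix_of_suffix_length_le hq₁' (List.suffix_append E₂ q₂) hle
  rcases eq_or_ne e [] with rfl | he
  · simp
  have hE : E₁ = E₂ ++ e := List.append_cancel_right (by rw [h, List.append_assoc])
  obtain ⟨e', rfl⟩ := singleton_suffix_of_suffix hE₁ (hE ▸ List.suffix_append E₂ e) he
  obtain ⟨r, rfl⟩ := hq₁
  exact absurd ⟨e', r, by simp⟩ hq₂z

/-- In a concatenation of blocks of a marked code, the occurrences of `z f` are exactly the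
block boundaries. -/
structure IsMarkedCode (σ : α → List β) (S : Set α) (f z : β) : Prop where
  head : ∀ a ∈ S, [f] <+: σ a
  last : ∀ a ∈ S, [z] <:+ σ a
  not_infix : ∀ a ∈ S, ¬ [z, f] <:+: σ a
  prefix_free : ∀ a ∈ S, ∀ b ∈ S, a ≠ b → ¬ σ a <+: σ b

namespace IsMarkedCode

variable {σ : α → List β} {S : Set α}

lemma suffix_append_flatMap (hσ : IsMarkedCode σ S f z) {D : List β} {v : List α}
    (hD : [z] <:+ D) (hv : ∀ a ∈ v, a ∈ S) :
    [z] <:+ D ++ v.flatMap σ := by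
  rcases List.eq_nil_or_concat v with rfl | ⟨v, a, rfl⟩
  · simpa using hD
  · rw [List.concat_eq_append, List.flatMap_append, List.flatMap_singleton, ← List.append_assoc]
    exact (hσ.last a (hv a (by simp))).trans (List.suffix_append _ _)

lemma eq_of_append_eq_append (hσ : IsMarkedCode σ S f z) {D₁ D₂ : List β} {a₁ a₂ : α}
    (h : D₁ ++ σ a₁ = D₂ ++ σ a₂) (hD₁ : [z] <:+ D₁) (hD₂ : [z] <:+ D₂) (ha₁ : a₁ ∈ S)
    (ha₂ : a₂ ∈ S) : a₁ = a₂ := by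
  have heq := eq_of_append_eq_append_of_marker h hD₁ hD₂ (hσ.head a₁ ha₁) (hσ.head a₂ ha₂)
    (hσ.not_infix a₁ ha₁) (hσ.not_infix a₂ ha₂)
  by_contra hne
  exact hσ.prefix_free a₁ ha₁ a₂ ha₂ hne (heq ▸ List.prefix_refl _)

lemma suffix_or_suffix_of_append_flatMap_eq (hσ : IsMarkedCode σ S f z)
    {D₁ D₂ : List β} {v₁ v₂ : List α}
    (h : D₁ ++ v₁.flatMap σ = D₂ ++ v₂.flatMap σ) (hD₁ : [z] <:+ D₁) (hD₂ : [z] <:+ D₂)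
    (hv₁ : ∀ a ∈ v₁, a ∈ S) (hv₂ : ∀ a ∈ v₂, a ∈ S) : v₁ <:+ v₂ ∨ v₂ <:+ v₁ := by
  induction v₁ using List.reverseRecOn generalizing v₂ with
  | nil => exact Or.inl (List.nil_suffix)
  | append_singleton v₁ a₁ ih =>
    rcases List.eq_nil_or_concat v₂ with rfl | ⟨v₂, a₂, rfl⟩
    · exact Or.inr (List.nil_suffix)
    rw [List.concat_eq_append] at hv₂ h ⊢
    simp only [List.flatMap_append, List.flatMap_singleton, ← List.append_assoc] at h
    have hv₁' : ∀ a ∈ v₁, a ∈ S := fun a ha => hv₁ a (by simp [ha])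
    have hv₂' : ∀ a ∈ v₂, a ∈ S := fun a ha => hv₂ a (by simp [ha])
    obtain rfl : a₁ = a₂ := hσ.eq_of_append_eq_append h (hσ.suffix_append_flatMap hD₁ hv₁')
      (hσ.suffix_append_flatMap hD₂ hv₂') (hv₁ a₁ (by simp)) (hv₂ a₂ (by simp))
    rcases ih (List.append_cancel_right h) hv₁' hv₂' with hs | hs
    · exact Or.inl (List.suffix_append_self_iff.mpr hs)
    · exact Or.inr (List.suffix_append_self_iff.mpr hs)

lemma exists_decomp_of_infix (hσ : IsMarkedCode σ S f z) {B : ℕ}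
    (hB : ∀ a ∈ S, (σ a).length ≤ B) {u : List α} {w : List β} {c : β}
    (hu : ∀ a ∈ u, a ∈ S) (h : w ++ [c] <:+: u.flatMap σ) (hw : B ≤ w.length) :
    ∃ D v b p t, [z] <:+ D ∧ D.length ≤ B ∧ v ++ [b] <:+: u ∧ σ b = p ++ c :: t ∧
      w = D ++ v.flatMap σ ++ p := by
  obtain ⟨g, t, hgt⟩ := h
  obtain ⟨v₁, b, p, t', hv₁, hb, hgw⟩ := exists_eq_flatMap_append_of_prefix (q := g ++ w)
    ⟨t, by simpa [List.append_assoc] using hgt⟩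
  have hpB : p.length < B := by
    have := hB b (hu b (hv₁.subset (by simp)))
    rw [hb] at this
    simp only [List.length_append, List.length_cons] at this
    omega
  have hp : p <:+ g ++ w := hgw ▸ List.suffix_append _ _
  obtain ⟨w', rfl⟩ := List.suffix_of_suffix_length_le hp (List.suffix_append g w) (by omega)
  have hw' : g ++ w' = v₁.flatMap σ := List.append_cancel_right (by rw [← hgw, List.append_assoc])
  have hw'ne : w' ≠ [] := by
    rintro rfl
    simp only [List.nil_append] at hw
    omega
  obtain ⟨D, v, a, ha, hD, hDa, hv, rfl⟩ :=
    exists_eq_append_flatMap_of_suffix (hw' ▸ List.suffix_append g w') hw'ne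
  have haS : a ∈ S := hu a (hv₁.subset (List.mem_append_left _ ha))
  exact ⟨D, v, b, p, t', singleton_suffix_of_suffix (hσ.last a haS) hDa hD,
    hDa.length_le.trans (hB a haS),
    (List.suffix_append_self_iff.mpr hv).isInfix.trans hv₁.isInfix, hb, rfl⟩

lemma lt_length_of_decomp {B L : ℕ} (hB : ∀ a ∈ S, (σ a).length ≤ B) {D p t : List β}
    {v : List α} {b : α} {c : β} (hv : ∀ a ∈ v, a ∈ S) (hb : b ∈ S) (hD : D.length ≤ B)
    (hσb : σ b = p ++ c :: t) (hw : B * (L + 2) ≤ (D ++ v.flatMap σ ++ p).length) :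
    L < v.length := by
  have hp : p.length + 1 ≤ B := by
    have := hB b hb
    simp only [hσb, List.length_append, List.length_cons] at this
    omega
  have hvB : (v.flatMap σ).length ≤ v.length * B := by
    rw [List.length_flatMap]
    simpa using List.sum_le_card_nsmul (v.map fun a => (σ a).length) B
      (by simpa using fun a ha => hB a (hv a ha))
  simp only [List.length_append] at hw
  have : B * (L + 2) < B * (v.length + 2) := by nlinarith
  have := Nat.lt_of_mul_lt_mul_left this
  omega

lemma eq_nil_of_decomp (hσ : IsMarkedCode σ S f z) {w D₁ D₂ p t : List β} {v₁ v₂ : List α}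
    {b : α} {c : β} (hw₁ : w = D₁ ++ v₁.flatMap σ) (hw₂ : w = D₂ ++ v₂.flatMap σ ++ p)
    (hD₁ : [z] <:+ D₁) (hD₂ : [z] <:+ D₂) (hv₁ : ∀ a ∈ v₁, a ∈ S) (hv₂ : ∀ a ∈ v₂, a ∈ S)
    (hv₁ne : v₁ ≠ []) (hb : b ∈ S) (hσb : σ b = p ++ c :: t) : p = [] := by
  by_contra hp
  obtain ⟨v₁, a, rfl⟩ := List.eq_nil_or_concat v₁ |>.resolve_left hv₁ne
  rw [List.concat_eq_append] at hv₁ hw₁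
  rw [List.flatMap_append, List.flatMap_singleton, ← List.append_assoc] at hw₁
  have ha : a ∈ S := hv₁ a (by simp)
  have hpb : p <+: σ b := ⟨c :: t, hσb.symm⟩
  have hap : σ a = p := eq_of_append_eq_append_of_marker (hw₁.symm.trans hw₂)
    (hσ.suffix_append_flatMap hD₁ fun a' ha' => hv₁ a' (by simp [ha']))
    (hσ.suffix_append_flatMap hD₂ hv₂) (hσ.head a ha)
    (singleton_prefix_of_prefix (hσ.head b hb) hpb hp) (hσ.not_infix a ha)
    fun h => hσ.not_infix b hb (h.trans hpb.isInfix)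
  rcases eq_or_ne a b with rfl | hab
  · simpa [hap] using congrArg List.length hσb
  · exact hσ.prefix_free a ha b hb hab (hap ▸ hpb)

lemma prefix_eq_of_decomp (hσ : IsMarkedCode σ S f z) {w D₁ D₂ p₁ p₂ t₁ t₂ : List β}
    {v₁ v₂ : List α} {b₁ b₂ : α} {c₁ c₂ : β}
    (hw₁ : w = D₁ ++ v₁.flatMap σ ++ p₁) (hw₂ : w = D₂ ++ v₂.flatMap σ ++ p₂)
    (hD₁ : [z] <:+ D₁) (hD₂ : [z] <:+ D₂) (hv₁ : ∀ a ∈ v₁, a ∈ S) (hv₂ : ∀ a ∈ v₂, a ∈ S)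
    (hv₁ne : v₁ ≠ []) (hv₂ne : v₂ ≠ []) (hb₁ : b₁ ∈ S) (hb₂ : b₂ ∈ S)
    (hσ₁ : σ b₁ = p₁ ++ c₁ :: t₁) (hσ₂ : σ b₂ = p₂ ++ c₂ :: t₂) (hc : c₁ ≠ c₂) : p₁ = p₂ := by
  rcases eq_or_ne p₁ [] with rfl | hp₁ <;> rcases eq_or_ne p₂ [] with rfl | hp₂
  · have h₁ := hσ.head b₁ hb₁
    have h₂ := hσ.head b₂ hb₂
    simp only [hσ₁, hσ₂, List.nil_append, List.singleton_prefix_cons_iff] at h₁ h₂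
    exact absurd (h₁.symm.trans h₂) hc
  · exact (hσ.eq_nil_of_decomp (by simpa using hw₁) hw₂ hD₁ hD₂ hv₁ hv₂ hv₁ne hb₂ hσ₂).symm
  · exact hσ.eq_nil_of_decomp (by simpa using hw₂) hw₁ hD₂ hD₁ hv₂ hv₁ hv₂ne hb₁ hσ₁
  · have hpb₁ : p₁ <+: σ b₁ := ⟨c₁ :: t₁, hσ₁.symm⟩
    have hpb₂ : p₂ <+: σ b₂ := ⟨c₂ :: t₂, hσ₂.symm⟩
    exact eq_of_append_eq_append_of_marker (hw₁.symm.trans hw₂)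
      (hσ.suffix_append_flatMap hD₁ hv₁) (hσ.suffix_append_flatMap hD₂ hv₂)
      (singleton_prefix_of_prefix (hσ.head b₁ hb₁) hpb₁ hp₁)
      (singleton_prefix_of_prefix (hσ.head b₂ hb₂) hpb₂ hp₂)
      (fun h => hσ.not_infix b₁ hb₁ (h.trans hpb₁.isInfix))
      (fun h => hσ.not_infix b₂ hb₂ (h.trans hpb₂.isInfix))

theorem exists_firstDiff_of_infix (hσ : IsMarkedCode σ S f z) {B L : ℕ}
    (hB : ∀ a ∈ S, (σ a).length ≤ B) {u₁ u₂ : List α} {w : List β} {c₁ c₂ : β}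
    (hu₁ : ∀ a ∈ u₁, a ∈ S) (hu₂ : ∀ a ∈ u₂, a ∈ S)
    (h₁ : w ++ [c₁] <:+: u₁.flatMap σ) (h₂ : w ++ [c₂] <:+: u₂.flatMap σ) (hc : c₁ ≠ c₂)
    (hw : B * (L + 2) ≤ w.length) :
    ∃ b₁ b₂ p v, b₁ ∈ S ∧ b₂ ∈ S ∧ FirstDiff (σ b₁) (σ b₂) p c₁ c₂ ∧
      v ++ [b₁] <:+: u₁ ∧ v ++ [b₂] <:+: u₂ ∧ L ≤ v.length ∧ z :: p <:+ w := by
  have hBw : B ≤ w.length := (Nat.le_mul_of_pos_right B (by omega)).trans hw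
  obtain ⟨D₁, v₁, b₁, p₁, t₁, hD₁, hD₁B, hvb₁, hσ₁, hw₁⟩ :=
    hσ.exists_decomp_of_infix hB hu₁ h₁ hBw
  obtain ⟨D₂, v₂, b₂, p₂, t₂, hD₂, hD₂B, hvb₂, hσ₂, hw₂⟩ :=
    hσ.exists_decomp_of_infix hB hu₂ h₂ hBw
  have hv₁ : ∀ a ∈ v₁, a ∈ S := fun a ha => hu₁ a (hvb₁.subset (by simp [ha]))
  have hv₂ : ∀ a ∈ v₂, a ∈ S := fun a ha => hu₂ a (hvb₂.subset (by simp [ha]))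
  have hb₁ : b₁ ∈ S := hu₁ b₁ (hvb₁.subset (by simp))
  have hb₂ : b₂ ∈ S := hu₂ b₂ (hvb₂.subset (by simp))
  have hLv₁ : L < v₁.length := lt_length_of_decomp hB hv₁ hb₁ hD₁B hσ₁ (hw₁ ▸ hw)
  have hLv₂ : L < v₂.length := lt_length_of_decomp hB hv₂ hb₂ hD₂B hσ₂ (hw₂ ▸ hw)
  obtain rfl : p₁ = p₂ := hσ.prefix_eq_of_decomp hw₁ hw₂ hD₁ hD₂ hv₁ hv₂
    (List.ne_nil_of_length_pos (by omega)) (List.ne_nil_of_length_pos (by omega)) hb₁ hb₂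
    hσ₁ hσ₂ hc
  have hzp : z :: p₁ <:+ w := by
    obtain ⟨E, hE⟩ := hσ.suffix_append_flatMap hD₁ hv₁
    exact ⟨E, by rw [hw₁, ← hE]; simp⟩
  have hFD : FirstDiff (σ b₁) (σ b₂) p₁ c₁ c₂ := ⟨hc, ⟨t₁, hσ₁⟩, ⟨t₂, hσ₂⟩⟩
  have hsnoc {v v' : List α} {b : α} {u : List α} (hv : v <:+ v') (hvb : v' ++ [b] <:+: u) :
      v ++ [b] <:+: u := (List.suffix_append_self_iff.mpr hv).isInfix.trans hvb
  rcases hσ.suffix_or_suffix_of_append_flatMap_eq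
      (List.append_cancel_right (hw₁.symm.trans hw₂)) hD₁ hD₂ hv₁ hv₂ with hv | hv
  · exact ⟨b₁, b₂, p₁, v₁, hb₁, hb₂, hFD, hvb₁, hsnoc hv hvb₂, hLv₁.le, hzp⟩
  · exact ⟨b₁, b₂, p₁, v₂, hb₁, hb₂, hFD, hsnoc hv hvb₁, hvb₂, hLv₂.le, hzp⟩

end IsMarkedCode

end MarkedCode

section FactorWord

variable {A : Type*}

lemma factorWord_eq_map (x : ℤ → A) (a : ℤ) (len : ℕ) :
    factorWord x a len = (List.range len).map fun t : ℕ => x (a + t) := by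
  simp [factorWord, ← List.map_eq_flatMap]

lemma length_factorWord (x : ℤ → A) (a : ℤ) (len : ℕ) : (factorWord x a len).length = len := by
  simp [factorWord_eq_map]

lemma factorWord_add (x : ℤ → A) (a : ℤ) (l₁ l₂ : ℕ) :
    factorWord x a (l₁ + l₂) = factorWord x a l₁ ++ factorWord x (a + l₁) l₂ := by
  simp [factorWord_eq_map, List.range_add, add_assoc]

lemma factorWord_succ (x : ℤ → A) (a : ℤ) (len : ℕ) :
    factorWord x a (len + 1) = factorWord x a len ++ [x (a + len)] := by
  rw [factorWord_add]
  simp [factorWord_eq_map]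

lemma factorWord_congr {x y : ℤ → A} {a : ℤ} {len : ℕ}
    (h : ∀ i, a ≤ i → i < a + len → x i = y i) : factorWord x a len = factorWord y a len := by
  simp only [factorWord_eq_map]
  exact List.map_congr_left fun t ht => h _ (by omega) (by simp at ht; omega)

lemma factorWord_sub_length_of_suffix {x : ℤ → A} {ℓ : ℤ} {L : ℕ}
    {s : List A} (hs : s <:+ factorWord x (ℓ - L) L) :
    factorWord x (ℓ - s.length) s.length = s := by
  obtain ⟨w, h⟩ := hs
  replace h := h.symm
  have hL : L = w.length + s.length := by simpa [length_factorWord] using congrArg List.length h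
  rw [hL, factorWord_add] at h
  have := (List.append_inj h (length_factorWord _ _ _)).2
  rwa [show ℓ - ↑(w.length + s.length) + w.length = ℓ - s.length by push_cast; ring] at this

end FactorWord

lemma exists_first_ne {A : Type*} {x y : ℤ → A} (hxy : x ≠ y) (hasym : SAsymp x y) :
    ∃ ℓ, (∀ i < ℓ, x i = y i) ∧ x ℓ ≠ y ℓ := by
  classical
  obtain ⟨ℓ₀, hℓ₀⟩ := hasym
  obtain ⟨ℓ, hℓ, hmin⟩ := Int.exists_least_of_bdd (P := fun i => x i ≠ y i)
    ⟨ℓ₀, fun i hi => not_lt.mp fun h => hi (hℓ₀ i h)⟩ (Function.ne_iff.mp hxy)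
  exact ⟨ℓ, fun i hi => not_not.mp fun h => absurd (hmin i h) (not_le.mpr hi), hℓ⟩

lemma tauIter_succ' (τ : ℕ → ℕ → List ℕ) (n d c : ℕ) :
    tauIter τ n (d + 1) c = (tauIter τ (n + 1) d c).flatMap (τ n) := by
  induction d generalizing c with
  | zero => simp [tauIter]
  | succ d ih =>
    rw [tauIter, tauIter, List.flatMap_assoc, show n + (d + 1) = n + 1 + d by omega]
    congr 1
    exact funext ih

/-- The word `v_1² v_2² … v_a²`, in `0`-based letters. -/
def doubledRange (a : ℕ) : List ℕ := (List.range a).flatMap fun j => [j, j]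

lemma doubledRange_succ (a : ℕ) : doubledRange (a + 1) = doubledRange a ++ [a, a] := by
  simp [doubledRange, List.range_succ]

lemma length_doubledRange (a : ℕ) : (doubledRange a).length = 2 * a := by
  induction a with
  | zero => rfl
  | succ a ih =>
    simp only [doubledRange_succ, List.length_append, ih, List.length_cons, List.length_nil]
    ring

lemma doubledRange_prefix_of_lt {a b : ℕ} (h : a < b) :
    doubledRange a ++ [a, a] <+: doubledRange b := by
  induction b, h using Nat.le_induction with
  | base => rw [doubledRange_succ]
  | succ b _ ih => exact ih.trans (doubledRange_succ b ▸ List.prefix_append _ _)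

lemma doubledRange_append_prefix_of_le {a b : ℕ} (h : a ≤ b) :
    doubledRange a ++ [a] <+: doubledRange b ++ [b] := by
  rcases h.eq_or_lt with rfl | h
  · exact List.prefix_refl _
  · exact (List.prefix_append_right_inj _ |>.mpr (by simp)).trans
      ((doubledRange_prefix_of_lt h).trans (List.prefix_append _ _))

lemma doubledRange_append_prefix_pkPrefix {k a : ℕ} (h : a ≤ k) :
    doubledRange a ++ [a] <+: pkPrefix k a := by
  obtain ⟨l, hl⟩ : ∃ l, k + 1 - a = l + 1 := ⟨k - a, by omega⟩
  rw [pkPrefix, ← List.range'_eq_map_range, hl, List.range'_succ]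
  simp [doubledRange]

lemma doubledRange_append_pair_prefix_pkPrefix {k a : ℕ} (h : a + 1 ≤ k) :
    doubledRange a ++ [a, a + 1] <+: pkPrefix k a := by
  obtain ⟨l, hl⟩ : ∃ l, k + 1 - a = l + 2 := ⟨k - a - 1, by omega⟩
  rw [pkPrefix, ← List.range'_eq_map_range, hl, List.range'_succ, List.range'_succ]
  simp [doubledRange]

namespace PropertyPk

variable {k : ℕ} {m : ℕ → ℕ} {τ : ℕ → ℕ → List ℕ}

lemma exists_replicate_prefix (hk : 1 ≤ k) (hP : PropertyPk k m τ) {ν a : ℕ} (hν : 1 ≤ ν)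
    (ha : a < m (ν + 1)) : ∃ j, 1 ≤ j ∧ j ≤ a + 1 ∧ List.replicate j 0 ++ [1] <+: τ ν a := by
  obtain ⟨-, -, -, -, hpre, hpre', -⟩ := hP
  rcases le_or_gt a k with hak | hak
  · rcases Nat.eq_zero_or_pos a with rfl | ha₀
    · exact ⟨1, le_rfl, le_rfl,
        (doubledRange_append_pair_prefix_pkPrefix hk).trans (hpre ν hν 0 (Nat.zero_le k))⟩
    · exact ⟨2, by omega, by omega, ((doubledRange_append_prefix_of_le ha₀).trans
        (doubledRange_append_prefix_pkPrefix hak)).trans (hpre ν hν a hak)⟩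
  · exact ⟨a + 1, by omega, le_rfl, hpre' ν hν a hak ha⟩

lemma firstDiff_of_lt (hk : 1 ≤ k) (hP : PropertyPk k m τ) {ν a b : ℕ} (hν : 1 ≤ ν)
    (hb : b < m (ν + 1)) (hab : a < b) :
    ∃ p c, c + 1 ≤ k ∧ FirstDiff (τ ν a) (τ ν b) p (c + 1) c ∧
      (b ≤ k → c = a ∧ p = doubledRange a ++ [a]) := by
  obtain ⟨-, -, -, -, hpre, hpre', -⟩ := id hP
  rcases le_or_gt b k with hbk | hbk
  · refine ⟨doubledRange a ++ [a], a, by omega, FirstDiff.of_prefix ?_ ?_ (by omega),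
      fun _ => ⟨rfl, rfl⟩⟩
    · simpa using (doubledRange_append_pair_prefix_pkPrefix (by omega)).trans
        (hpre ν hν a (by omega))
    · simpa using (doubledRange_prefix_of_lt hab).trans
        ((List.prefix_append _ _).trans (hpre ν hν b hbk))
  · obtain ⟨j, -, hja, hj⟩ := hP.exists_replicate_prefix hk hν (hab.trans hb)
    refine ⟨List.replicate j 0, 0, hk, FirstDiff.of_prefix hj ?_ one_ne_zero,
      fun h => absurd h (by omega)⟩
    have hrep : List.replicate j 0 ++ [0] <+: List.replicate (b + 1) 0 := by
      rw [← List.replicate_succ', List.prefix_replicate_iff]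
      exact ⟨by simp only [List.length_replicate]; omega, by simp⟩
    exact hrep.trans ((List.prefix_append _ _).trans (hpre' ν hν b hbk hb))

theorem isMarkedCode (hk : 1 ≤ k) (hP : PropertyPk k m τ) {ν : ℕ} (hν : 1 ≤ ν) :
    IsMarkedCode (τ ν) (Set.Iio (m (ν + 1))) 0 (m ν - 1) := by
  obtain ⟨-, -, -, -, -, -, hend⟩ := id hP
  refine ⟨fun a ha => ?_, fun a ha => (hend ν hν a ha).1, fun a ha => (hend ν hν a ha).2,
    fun a ha b hb hab => ?_⟩
  · obtain ⟨j, hj, -, hjτ⟩ := hP.exists_replicate_prefix hk hν ha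
    obtain ⟨j, rfl⟩ := Nat.exists_eq_add_of_le' hj
    exact (List.prefix_append_of_prefix (by simp [List.replicate_succ])).trans hjτ
  · rcases hab.lt_or_gt with hab | hab
    · obtain ⟨p, c, -, hFD, -⟩ := hP.firstDiff_of_lt hk hν hb hab
      exact hFD.not_prefix
    · obtain ⟨p, c, -, hFD, -⟩ := hP.firstDiff_of_lt hk hν ha hab
      exact hFD.symm.not_prefix

lemma firstDiff_letters (hk : 1 ≤ k) (hP : PropertyPk k m τ) {ν a a' b b' : ℕ} {q : List ℕ}
    (hν : 1 ≤ ν) (ha : a < m (ν + 1)) (ha' : a' < m (ν + 1))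
    (h : FirstDiff (τ ν a) (τ ν a') q b b') : min b b' + 1 = max b b' ∧ max b b' ≤ k := by
  have hne : a ≠ a' := by rintro rfl; exact h.ne rfl
  rcases hne.lt_or_gt with haa' | haa'
  · obtain ⟨p, c, hc, hFD, -⟩ := hP.firstDiff_of_lt hk hν ha' haa'
    obtain ⟨-, rfl, rfl⟩ := hFD.unique h
    omega
  · obtain ⟨p, c, hc, hFD, -⟩ := hP.firstDiff_of_lt hk hν ha haa'
    obtain ⟨-, rfl, rfl⟩ := hFD.symm.unique h
    omega

lemma firstDiff_prefix (hk : 1 ≤ k) (hP : PropertyPk k m τ) {ν b b' c c' : ℕ} {p : List ℕ}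
    (hν : 1 ≤ ν) (hb : b ≤ k) (hb' : b' ≤ k) (h : FirstDiff (τ ν b) (τ ν b') p c c') :
    p = doubledRange (min b b') ++ [min b b'] := by
  wlog hbb' : b < b' generalizing b b' c c'
  · have hne : b ≠ b' := by rintro rfl; exact h.ne rfl
    rw [min_comm]
    exact this hb' hb h.symm (by omega)
  obtain ⟨hkm, -⟩ := id hP
  have hb'm : b' < m (ν + 1) := hb'.trans_lt (hkm (ν + 1) (by omega))
  obtain ⟨q, d, -, hFD, hq⟩ := hP.firstDiff_of_lt hk hν hb'm hbb'
  rw [(hFD.unique h).1.symm, (hq hb').2, min_eq_left hbb'.le]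

lemma lt_of_mem_flatMap (hP : PropertyPk k m τ) {ν : ℕ} {u : List ℕ}
    (hu : ∀ b ∈ u, b < m (ν + 1)) : ∀ a ∈ u.flatMap (τ ν), a < m ν := by
  obtain ⟨-, hlet, -⟩ := hP
  simp only [List.mem_flatMap]
  rintro a ⟨b, hb, ha⟩
  exact (hlet ν b (hu b hb)).2 a ha

lemma lt_of_mem_tauIter (hP : PropertyPk k m τ) {ν d c : ℕ} (hc : c < m (ν + d)) :
    ∀ a ∈ tauIter τ ν d c, a < m ν := by
  induction d generalizing ν with
  | zero => simpa [tauIter] using hc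
  | succ d ih =>
    rw [tauIter_succ']
    exact hP.lt_of_mem_flatMap (ih (by rwa [Nat.add_right_comm, Nat.add_assoc]))

lemma exists_infix_flatMap_flatMap (hP : PropertyPk k m τ) {n : ℕ} (hn : 1 ≤ n)
    {x : ℤ → ℕ} (hx : x ∈ SAdicLevel m τ n) (a : ℤ) (len : ℕ) :
    ∃ u : List ℕ, (∀ b ∈ u, b < m (n + 2)) ∧
      factorWord x a len <:+: (u.flatMap (τ (n + 1))).flatMap (τ n) := by
  obtain ⟨hkm, -, -, hprim, -⟩ := id hP
  obtain ⟨N, c, hN, hc, hxc⟩ := hx.2 a len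
  obtain ⟨d, rfl⟩ : ∃ d, N = n + 1 + d := ⟨N - (n + 1), by omega⟩
  have h0 : 0 < m (n + 1 + d + 1) := Nat.zero_lt_of_lt (hkm _ (by omega))
  have hc0 : c ∈ τ (n + 1 + d) 0 := hprim _ (by omega) 0 h0 c hc
  refine ⟨tauIter τ (n + 2) d 0,
    hP.lt_of_mem_tauIter (by rwa [show n + 2 + d = n + 1 + d + 1 by omega]), ?_⟩
  rw [← tauIter_succ', ← tauIter_succ']
  have hcd : tauIter τ n (d + 1) c <:+: tauIter τ n (d + 1 + 1) 0 := by
    rw [show tauIter τ n (d + 1 + 1) 0 = (τ (n + 1 + d) 0).flatMap (tauIter τ n (d + 1)) by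
      rw [tauIter, show n + (d + 1) = n + 1 + d by omega]]
    exact List.infix_flatMap_of_mem hc0 _
  rw [show n + 1 + d - n = d + 1 by omega] at hxc
  exact hxc.trans hcd

theorem exists_signal_suffix (hk : 1 ≤ k) (hP : PropertyPk k m τ) {n : ℕ} (hn : 1 ≤ n) :
    ∃ L, ∀ {w u u' : List ℕ} {c c' : ℕ}, L ≤ w.length → c ≠ c' →
      (∀ b ∈ u, b < m (n + 2)) → (∀ b ∈ u', b < m (n + 2)) →
      w ++ [c] <:+: (u.flatMap (τ (n + 1))).flatMap (τ n) →
      w ++ [c'] <:+: (u'.flatMap (τ (n + 1))).flatMap (τ n) →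
      ∃ i, i + 1 ≤ k ∧ (m n - 1) :: (doubledRange i ++ [i]) <:+ w := by
  obtain ⟨B, hB⟩ := ((Set.finite_Iio (m (n + 1))).image fun a => (τ n a).length).bddAbove
  obtain ⟨B', hB'⟩ := ((Set.finite_Iio (m (n + 2))).image fun a => (τ (n + 1) a).length).bddAbove
  -- long enough for `w` to contain `2 * B'` full level-`(n+1)` blocks, which is what the same
  -- argument needs one level up
  refine ⟨B * (B' * 2 + 2), fun hw hc hu hu' h h' => ?_⟩
  obtain ⟨b, b', p, v, -, -, hp, hvb, hvb', hv, hzp⟩ :=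
    (hP.isMarkedCode hk hn).exists_firstDiff_of_infix (L := B' * 2)
      (fun a ha => hB ⟨a, ha, rfl⟩) (hP.lt_of_mem_flatMap hu) (hP.lt_of_mem_flatMap hu')
      h h' hc hw
  obtain ⟨a, a', q, -, ha, ha', hq, -⟩ :=
    (hP.isMarkedCode hk (Nat.le_add_left 1 n)).exists_firstDiff_of_infix (L := 0)
      (fun a ha => hB' ⟨a, ha, rfl⟩) hu hu' hvb hvb' (by rintro rfl; exact hp.ne rfl)
      (by simpa using hv)
  obtain ⟨hmin, hmax⟩ := hP.firstDiff_letters hk (Nat.le_add_left 1 n) ha ha' hq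
  refine ⟨min b b', by omega, ?_⟩
  rwa [← hP.firstDiff_prefix hk hn (by omega) (by omega) hp]

end PropertyPk

/-- Under Property `(P_k)`, for a nontrivial asymptotic pair `(x, y)` at
level `n ≥ 1`, the bifurcation is `J(x,y) = (v_{i,n}, ℓ)` with `1 ≤ i ≤ k`, and at the
bifurcation point the signal is preceded by `v_{m_n,n} v_{1,n}² … v_{i-1,n}²`:
`x_{[ℓ-2i, ℓ)} = v_{m_n,n} v_{1,n}² … v_{i-1,n}² v_{i,n}`.
(Letters are `0`-based: `v_{i,n}` is `i - 1`.) -/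
theorem signal_preceded_of_propertyPk
    (k : ℕ) (hk : 1 ≤ k) (m : ℕ → ℕ) (τ : ℕ → ℕ → List ℕ) (hP : PropertyPk k m τ)
    (n : ℕ) (hn : 1 ≤ n) (x y : ℤ → ℕ)
    (hx : x ∈ SAdicLevel m τ n) (hy : y ∈ SAdicLevel m τ n)
    (hxy : x ≠ y) (hasym : SAsymp x y) :
    ∃ (ℓ : ℤ) (i : ℕ), 1 ≤ i ∧ i ≤ k ∧
      (∀ j < ℓ, x j = y j) ∧ x ℓ ≠ y ℓ ∧ x (ℓ - 1) = i - 1 ∧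
      factorWord x (ℓ - 2 * (i : ℤ)) (2 * i) =
        (m n - 1) :: ((List.range (i - 1)).flatMap (fun j => [j, j]) ++ [i - 1]) := by
  obtain ⟨ℓ, hxyℓ, hℓ⟩ := exists_first_ne hxy hasym
  obtain ⟨L, hL⟩ := hP.exists_signal_suffix hk hn
  have hwx : factorWord x (ℓ - L) (L + 1) = factorWord x (ℓ - L) L ++ [x ℓ] := by
    rw [factorWord_succ, sub_add_cancel]
  have hwy : factorWord y (ℓ - L) (L + 1) = factorWord x (ℓ - L) L ++ [y ℓ] := by
    rw [factorWord_succ, sub_add_cancel, factorWord_congr fun j _ hj => (hxyℓ j (by omega)).symm]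
  obtain ⟨u, hu, hxu⟩ := hP.exists_infix_flatMap_flatMap hn hx (ℓ - L) (L + 1)
  obtain ⟨u', hu', hyu⟩ := hP.exists_infix_flatMap_flatMap hn hy (ℓ - L) (L + 1)
  obtain ⟨i, hik, hsuf⟩ :=
    hL (length_factorWord x _ L).ge hℓ hu hu' (hwx ▸ hxu) (hwy ▸ hyu)
  have hlast := factorWord_sub_length_of_suffix
    ((List.suffix_append ((m n - 1) :: doubledRange i) [i]).trans hsuf)
  have hwin := factorWord_sub_length_of_suffix hsuf
  have hlen : ((m n - 1) :: (doubledRange i ++ [i])).length = 2 * (i + 1) := by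
    simp only [List.length_cons, List.length_append, length_doubledRange, List.length_nil]
    ring
  rw [hlen] at hwin
  refine ⟨ℓ, i + 1, by omega, hik, hxyℓ, hℓ, by simpa [factorWord_eq_map] using hlast, ?_⟩
  simpa [doubledRange] using hwin

end AsympSOE
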